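/- arXiv:2405.19034 — 3 statements merged into one kernel-verified Lean document; each statement's English description precedes it below -/
import Mathlib

section
/- Let p ∈ [1,∞] and let p' be its conjugate exponent (1/p + 1/p' = 1). There exist constants 0 < c ≤ C, depending only on d and p, such that for every nonnegative measurable function f : ℝ^d → [0,∞): c·|||f|||_p ≤ sup { ∫_{ℝ^d} f(x) g(x) dx : g : ℝ^d → [0,∞) measurable with |||g|||*_{p'} ≤ 1 } ≤ C·|||f|||_p. -/
open MeasureTheory ENNReal

noncomputable section

/-- The half-open unit cube centered at the lattice point `z`. -/
def unitCube (d : ℕ) (z : Fin d → ℤ) : Set (EuclideanSpace ℝ (Fin d)) :=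
  {x | ∀ i, (z i : ℝ) - 1/2 ≤ x i ∧ x i < (z i : ℝ) + 1/2}

/-- The localized norm `|||f|||_p := sup_{z ∈ ℤ^d} ‖f·1_{D_z}‖_{L^p}`. -/
def locNorm (d : ℕ) (p : ℝ≥0∞) (f : EuclideanSpace ℝ (Fin d) → ℝ) : ℝ≥0∞ :=
  ⨆ z : Fin d → ℤ, eLpNorm ((unitCube d z).indicator f) p volume

/-- The localized norm `|||f|||*_p := Σ_{z ∈ ℤ^d} ‖f·1_{D_z}‖_{L^p}`. -/
def locNormStar (d : ℕ) (p : ℝ≥0∞) (f : EuclideanSpace ℝ (Fin d) → ℝ) : ℝ≥0∞ :=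
  ∑' z : Fin d → ℤ, eLpNorm ((unitCube d z).indicator f) p volume

/-!
Both constants can be taken equal to `1`. The upper bound is Hölder's inequality on each cube
`D_z`, summed over `z`. For the lower bound, fix a cube `D_z`: the restriction of `f` to `D_z`
is normed, up to any `ε > 0`, by a nonnegative `g` supported in `D_z` with `‖g‖_{p'} ≤ 1`, and
such a `g` has `|||g|||*_{p'} = ‖g‖_{p'}`. For `p < ∞` one takes `g = (f / ‖f‖_p) ^ (p - 1)`
after truncating `f` to make `‖f‖_p` finite (Fatou); for `p = ∞`, a normalized indicator of a
level set `{f > ‖f‖_∞ - ε}`, which has positive measure.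
-/

section Duality

variable {α : Type*} [MeasurableSpace α] {μ : Measure α}

theorem lintegral_ofReal_mul_indicator {s : Set α} (hs : MeasurableSet s) (f g : α → ℝ) :
    ∫⁻ x, ENNReal.ofReal (f x * s.indicator g x) ∂μ =
      ∫⁻ x in s, ENNReal.ofReal (f x * g x) ∂μ := by
  rw [← lintegral_indicator hs]
  congr with x
  by_cases hx : x ∈ s <;> simp [hx]

theorem exists_lt_lintegral_ofReal_mul_of_lt_eLpNorm_top [IsFiniteMeasure μ] {f : α → ℝ}
    (hf : Measurable f) (hf0 : 0 ≤ f) {a : ℝ≥0∞} (ha : a < eLpNorm f ∞ μ) :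
    ∃ g : α → ℝ, Measurable g ∧ 0 ≤ g ∧ eLpNorm g 1 μ ≤ 1 ∧
      a < ∫⁻ x, ENNReal.ofReal (f x * g x) ∂μ := by
  obtain ⟨b, hab, hb⟩ := exists_between ha
  set A := {x | b < ENNReal.ofReal (f x)}
  have hA : MeasurableSet A := measurableSet_lt measurable_const hf.ennreal_ofReal
  have hA0 : μ A ≠ 0 := by
    intro hA0
    refine hb.not_ge ?_
    rw [eLpNorm_exponent_top]
    refine eLpNormEssSup_le_of_ae_enorm_bound ?_
    filter_upwards [measure_eq_zero_iff_ae_notMem.1 hA0] with x hx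
    simpa [A, Real.enorm_eq_ofReal (hf0 x)] using hx
  have hAc : ENNReal.ofReal (μ A).toReal⁻¹ = (μ A)⁻¹ := by
    rw [ofReal_inv_of_pos (toReal_pos hA0 (measure_ne_top μ A)),
      ofReal_toReal (measure_ne_top μ A)]
  refine ⟨A.indicator fun _ => (μ A).toReal⁻¹, measurable_const.indicator hA,
    Set.indicator_nonneg fun _ _ => by positivity, ?_, ?_⟩
  · rw [eLpNorm_indicator_const hA one_ne_zero one_ne_top, Real.enorm_eq_ofReal (by positivity),
      hAc]
    simp [ENNReal.inv_mul_cancel hA0 (measure_ne_top μ A)]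
  · calc a < b := hab
      _ = ∫⁻ _ in A, b * ENNReal.ofReal (μ A).toReal⁻¹ ∂μ := by
        rw [setLIntegral_const, hAc, mul_assoc, ENNReal.inv_mul_cancel hA0 (measure_ne_top μ A),
          mul_one]
      _ ≤ ∫⁻ x in A, ENNReal.ofReal (f x * (μ A).toReal⁻¹) ∂μ := by
        refine setLIntegral_mono' hA fun x hx => ?_
        rw [ofReal_mul (hf0 x)]
        exact mul_le_mul_left hx.le _
      _ = _ := (lintegral_ofReal_mul_indicator hA _ _).symm

variable {p q : ℝ≥0∞} [p.HolderConjugate q]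

theorem lintegral_ofReal_mul_le_eLpNorm_mul_eLpNorm {f g : α → ℝ}
    (hf : AEStronglyMeasurable f μ) (hg : AEStronglyMeasurable g μ) :
    ∫⁻ x, ENNReal.ofReal (f x * g x) ∂μ ≤ eLpNorm f p μ * eLpNorm g q μ :=
  calc ∫⁻ x, ENNReal.ofReal (f x * g x) ∂μ ≤ eLpNorm (fun x => f x * g x) 1 μ := by
        rw [eLpNorm_one_eq_lintegral_enorm]
        exact lintegral_mono fun x => Real.ofReal_le_enorm _
    _ ≤ eLpNorm f p μ * eLpNorm g q μ := by
        simpa using eLpNorm_le_eLpNorm_mul_eLpNorm'_of_norm hf hg (· * ·) 1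
          (.of_forall fun x => by simp [norm_mul])

theorem eLpNorm_rpow_sub_one_le (hp : p ≠ ∞) {h : α → ℝ} (hh0 : 0 ≤ h)
    (hh : eLpNorm h p μ ≤ 1) : eLpNorm (fun x => h x ^ (p.toReal - 1)) q μ ≤ 1 := by
  obtain rfl | hp1 := eq_or_ne p 1
  · obtain rfl : q = ∞ := (HolderConjugate.eq_top_iff_eq_one q 1).2 rfl
    simpa using eLpNormEssSup_le_of_ae_bound (μ := μ) (f := fun _ => (1 : ℝ)) (C := 1)
      (.of_forall fun _ => by simp)
  have hq : q ≠ ∞ := (HolderConjugate.ne_top_iff_ne_one q p).2 hp1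
  have hpq : p.toReal.HolderConjugate q.toReal := HolderConjugate.toReal_of_ne_top hp hq
  have hexp : q * ENNReal.ofReal (p.toReal - 1) = p := by
    rw [← ofReal_toReal hq, ← ofReal_mul toReal_nonneg, mul_comm, hpq.sub_one_mul_conj,
      ofReal_toReal hp]
  calc eLpNorm (fun x => h x ^ (p.toReal - 1)) q μ
      = eLpNorm (fun x => ‖h x‖ ^ (p.toReal - 1)) q μ := by
        simp only [Real.norm_of_nonneg (hh0 _)]
    _ = eLpNorm h p μ ^ (p.toReal - 1) := by rw [eLpNorm_norm_rpow h hpq.sub_one_pos, hexp]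
    _ ≤ 1 := rpow_le_one hh hpq.sub_one_pos.le

theorem exists_lintegral_ofReal_mul_eq_eLpNorm (hp : p ≠ ∞) {f : α → ℝ} (hf : Measurable f)
    (hf0 : 0 ≤ f) (hfin : eLpNorm f p μ ≠ ∞) :
    ∃ g : α → ℝ, Measurable g ∧ 0 ≤ g ∧ eLpNorm g q μ ≤ 1 ∧
      ∫⁻ x, ENNReal.ofReal (f x * g x) ∂μ = eLpNorm f p μ := by
  obtain hN | hN := eq_or_ne (eLpNorm f p μ) 0
  · exact ⟨0, measurable_const, le_rfl, by simp, by simp [hN]⟩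
  set N := (eLpNorm f p μ).toReal
  set r := p.toReal
  have hNpos : 0 < N := toReal_pos hN hfin
  set h : α → ℝ := fun x => N⁻¹ * f x
  have hh0 : 0 ≤ h := fun x => mul_nonneg (inv_nonneg.2 hNpos.le) (hf0 x)
  have hh : eLpNorm h p μ = 1 := by
    rw [show h = N⁻¹ • f from rfl, eLpNorm_const_smul, Real.enorm_eq_ofReal (by positivity),
      ofReal_inv_of_pos hNpos, ofReal_toReal hfin, ENNReal.inv_mul_cancel hN hfin]
  have hr : 0 < r := toReal_pos (HolderConjugate.ne_zero p q) hp
  have hfh : ∀ x, ENNReal.ofReal (f x * h x ^ (r - 1)) = ENNReal.ofReal N * ‖h x‖ₑ ^ r := by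
    intro x
    have : f x = N * h x := by simp [h, hNpos.ne']
    rw [this, mul_assoc, ← Real.rpow_one_add' (hh0 x) (by simpa using hr.ne'), add_sub_cancel,
      ofReal_mul hNpos.le, Real.enorm_eq_ofReal (hh0 x), ofReal_rpow_of_nonneg (hh0 x) hr.le]
  refine ⟨fun x => h x ^ (r - 1), by fun_prop, fun x => Real.rpow_nonneg (hh0 x) _,
    eLpNorm_rpow_sub_one_le hp hh0 hh.le, ?_⟩
  calc ∫⁻ x, ENNReal.ofReal (f x * h x ^ (r - 1)) ∂μ
      = ENNReal.ofReal N * ∫⁻ x, ‖h x‖ₑ ^ r ∂μ := by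
        simp_rw [hfh]; exact lintegral_const_mul' _ _ ofReal_ne_top
    _ = eLpNorm f p μ := by
        rw [lintegral_rpow_enorm_eq_rpow_eLpNorm' hr, ← eLpNorm_eq_eLpNorm'
          (HolderConjugate.ne_zero p q) hp, hh, one_rpow, mul_one, ofReal_toReal hfin]

theorem exists_lt_lintegral_ofReal_mul_of_lt_eLpNorm [IsFiniteMeasure μ] {f : α → ℝ}
    (hf : Measurable f) (hf0 : 0 ≤ f) {a : ℝ≥0∞} (ha : a < eLpNorm f p μ) :
    ∃ g : α → ℝ, Measurable g ∧ 0 ≤ g ∧ eLpNorm g q μ ≤ 1 ∧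
      a < ∫⁻ x, ENNReal.ofReal (f x * g x) ∂μ := by
  obtain rfl | hp := eq_or_ne p ∞
  · obtain rfl : q = 1 := (HolderConjugate.eq_top_iff_eq_one ∞ q).1 rfl
    exact exists_lt_lintegral_ofReal_mul_of_lt_eLpNorm_top hf hf0 ha
  set F : ℕ → α → ℝ := fun n x => min (f x) n
  have hF : ∀ n, Measurable (F n) := fun n => hf.min measurable_const
  obtain ⟨n, hn⟩ : ∃ n, a < eLpNorm (F n) p μ := by
    have hFf : ∀ x, Filter.Tendsto (fun n => F n x) Filter.atTop (nhds (f x)) := fun x =>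
      tendsto_const_nhds.congr' <| (Filter.eventually_ge_atTop ⌈f x⌉₊).mono fun n hn =>
        (min_eq_left (Nat.ceil_le.1 hn)).symm
    have hfatou := Lp.eLpNorm_lim_le_liminf_eLpNorm (p := p) (μ := μ)
      (fun n => (hF n).aestronglyMeasurable) f (.of_forall hFf)
    exact (Filter.eventually_lt_of_lt_liminf (ha.trans_le hfatou)).exists
  have hFn_fin : eLpNorm (F n) p μ ≠ ∞ := by
    refine ((eLpNorm_le_of_ae_bound (C := n) (.of_forall fun x => ?_)).trans_lt
      (by finiteness)).ne
    rw [Real.norm_of_nonneg (le_min (hf0 x) n.cast_nonneg)]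
    exact min_le_right _ _
  obtain ⟨g, hg, hg0, hgq, hFg⟩ := exists_lintegral_ofReal_mul_eq_eLpNorm (q := q) hp (hF n)
    (fun x => le_min (hf0 x) n.cast_nonneg) hFn_fin
  refine ⟨g, hg, hg0, hgq, hn.trans_le (hFg ▸ lintegral_mono fun x => ?_)⟩
  exact ofReal_le_ofReal (mul_le_mul_of_nonneg_right (min_le_left _ _) (hg0 x))

end Duality

section UnitCube

variable {d : ℕ}

theorem unitCube_eq_preimage_pi (z : Fin d → ℤ) :
    unitCube d z = (MeasurableEquiv.toLp 2 (Fin d → ℝ)).symm ⁻¹'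
      Set.univ.pi fun i => Set.Ico ((z i : ℝ) - 1/2) ((z i : ℝ) + 1/2) := by
  ext x
  simp [unitCube, Set.mem_pi, Set.mem_Ico]

theorem measurableSet_unitCube (z : Fin d → ℤ) : MeasurableSet (unitCube d z) := by
  rw [unitCube_eq_preimage_pi]
  exact MeasurableEquiv.measurable _ (.univ_pi fun _ => measurableSet_Ico)

theorem volume_unitCube (z : Fin d → ℤ) : volume (unitCube d z) = 1 := by
  rw [unitCube_eq_preimage_pi,
    (EuclideanSpace.volume_preserving_symm_measurableEquiv_toLp (Fin d)).measure_preimage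
      (MeasurableSet.univ_pi fun _ => measurableSet_Ico).nullMeasurableSet, volume_pi_pi]
  norm_num

instance isFiniteMeasure_restrict_unitCube (z : Fin d → ℤ) :
    IsFiniteMeasure (volume.restrict (unitCube d z)) :=
  isFiniteMeasure_restrict.2 (by simp [volume_unitCube])

theorem pairwise_disjoint_unitCube : Pairwise (Function.onFun Disjoint (unitCube d)) := by
  intro z z' hzz'
  refine Set.disjoint_left.2 fun x hx hx' => hzz' (funext fun i => ?_)
  have h₁ : (z' i : ℝ) < z i + 1 := by linarith [(hx' i).1, (hx i).2]
  have h₂ : (z i : ℝ) < z' i + 1 := by linarith [(hx i).1, (hx' i).2]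
  norm_cast at h₁ h₂
  omega

theorem iUnion_unitCube : ⋃ z, unitCube d z = Set.univ := by
  refine Set.eq_univ_of_forall fun x =>
    Set.mem_iUnion.2 ⟨fun i => ⌊x i + 1/2⌋, fun i => ⟨?_, ?_⟩⟩
  · linarith [Int.floor_le (x i + 1/2)]
  · linarith [Int.lt_floor_add_one (x i + 1/2)]

end UnitCube

section LocNorm

variable {d : ℕ} {p q : ℝ≥0∞}

theorem locNormStar_indicator_unitCube (z : Fin d → ℤ) (g : EuclideanSpace ℝ (Fin d) → ℝ) :
    locNormStar d p ((unitCube d z).indicator g) =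
      eLpNorm g p (volume.restrict (unitCube d z)) := by
  rw [locNormStar, tsum_eq_single z fun z' hz' => ?_]
  · rw [Set.indicator_indicator, Set.inter_self,
      eLpNorm_indicator_eq_eLpNorm_restrict (measurableSet_unitCube z)]
  · rw [Set.indicator_indicator, (pairwise_disjoint_unitCube hz').inter_eq,
      Set.indicator_empty, eLpNorm_zero']

theorem lintegral_ofReal_mul_le_locNorm_mul_locNormStar [p.HolderConjugate q]
    {f g : EuclideanSpace ℝ (Fin d) → ℝ}
    (hf : AEStronglyMeasurable f) (hg : AEStronglyMeasurable g) :
    ∫⁻ x, ENNReal.ofReal (f x * g x) ≤ locNorm d p f * locNormStar d q g :=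
  calc ∫⁻ x, ENNReal.ofReal (f x * g x)
      = ∑' z, ∫⁻ x in unitCube d z, ENNReal.ofReal (f x * g x) := by
        rw [← lintegral_iUnion measurableSet_unitCube pairwise_disjoint_unitCube,
          iUnion_unitCube, Measure.restrict_univ]
    _ ≤ ∑' z, eLpNorm f p (volume.restrict (unitCube d z)) *
          eLpNorm g q (volume.restrict (unitCube d z)) :=
        ENNReal.tsum_le_tsum fun z =>
          lintegral_ofReal_mul_le_eLpNorm_mul_eLpNorm hf.restrict hg.restrict
    _ ≤ ∑' z, locNorm d p f * eLpNorm ((unitCube d z).indicator g) q volume := by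
        refine ENNReal.tsum_le_tsum fun z => ?_
        simp only [← eLpNorm_indicator_eq_eLpNorm_restrict (measurableSet_unitCube z)]
        exact mul_le_mul_left (le_iSup (fun z => eLpNorm ((unitCube d z).indicator f) p volume) z) _
    _ = locNorm d p f * locNormStar d q g := ENNReal.tsum_mul_left

end LocNorm

theorem locNorm_duality_general
    (d : ℕ) (p p' : ℝ≥0∞) (hpp' : 1/p + 1/p' = 1) :
    ∃ c C : ℝ, 0 < c ∧ c ≤ C ∧
      ∀ f : EuclideanSpace ℝ (Fin d) → ℝ, Measurable f → 0 ≤ f →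
        ENNReal.ofReal c * locNorm d p f ≤
            (⨆ g : {g : EuclideanSpace ℝ (Fin d) → ℝ //
                Measurable g ∧ 0 ≤ g ∧ locNormStar d p' g ≤ 1},
              ∫⁻ x, ENNReal.ofReal (f x * g.1 x)) ∧
        (⨆ g : {g : EuclideanSpace ℝ (Fin d) → ℝ //
            Measurable g ∧ 0 ≤ g ∧ locNormStar d p' g ≤ 1},
          ∫⁻ x, ENNReal.ofReal (f x * g.1 x)) ≤
          ENNReal.ofReal C * locNorm d p f := by
  have : p.HolderConjugate p' := holderConjugate_iff.2 (by simpa only [one_div] using hpp')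
  refine ⟨1, 1, one_pos, le_rfl, fun f hf hf0 => ?_⟩
  simp only [ENNReal.ofReal_one, one_mul]
  constructor
  · refine iSup_le fun z => le_of_forall_lt fun a ha => ?_
    rw [eLpNorm_indicator_eq_eLpNorm_restrict (measurableSet_unitCube z)] at ha
    obtain ⟨g, hg, hg0, hgq, hfg⟩ :=
      exists_lt_lintegral_ofReal_mul_of_lt_eLpNorm (q := p') hf hf0 ha
    refine hfg.trans_le (le_iSup_of_le ⟨(unitCube d z).indicator g,
      hg.indicator (measurableSet_unitCube z), Set.indicator_nonneg fun x _ => hg0 x,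
      (locNormStar_indicator_unitCube z g).trans_le hgq⟩ ?_)
    exact (lintegral_ofReal_mul_indicator (measurableSet_unitCube z) f g).ge
  · exact iSup_le fun g => (lintegral_ofReal_mul_le_locNorm_mul_locNormStar
      hf.aestronglyMeasurable g.2.1.aestronglyMeasurable).trans (mul_le_of_le_one_right' g.2.2.2)

/-- Duality: up to constants depending only on `d` and `p`,
`|||f|||_p ≍ sup { ∫ f·g : g ≥ 0 measurable, |||g|||*_{p'} ≤ 1 }`. -/
theorem locNorm_duality
    (d : ℕ) (hd : 1 ≤ d) (p p' : ℝ≥0∞) (hp : 1 ≤ p) (hpp' : 1/p + 1/p' = 1) :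
    ∃ c C : ℝ, 0 < c ∧ c ≤ C ∧
      ∀ f : EuclideanSpace ℝ (Fin d) → ℝ, Measurable f → 0 ≤ f →
        ENNReal.ofReal c * locNorm d p f ≤
            (⨆ g : {g : EuclideanSpace ℝ (Fin d) → ℝ //
                Measurable g ∧ 0 ≤ g ∧ locNormStar d p' g ≤ 1},
              ∫⁻ x, ENNReal.ofReal (f x * g.1 x)) ∧
        (⨆ g : {g : EuclideanSpace ℝ (Fin d) → ℝ //
            Measurable g ∧ 0 ≤ g ∧ locNormStar d p' g ≤ 1},
          ∫⁻ x, ENNReal.ofReal (f x * g.1 x)) ≤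
          ENNReal.ofReal C * locNorm d p f :=
  locNorm_duality_general d p p' hpp'

end
end

section
/- (Estimate for Beta functions.) For every α ∈ (0,1], every β > 0 and every integer k ≥ 1, the Beta function satisfies B(α, kβ + 1) = ∫_0^1 r^{α−1} (1−r)^{kβ} dr ≤ (1/α + 1/β) · k^{−α}. -/
/-!
Split the integral at `c = 1/k`. On `[0, c]` drop the factor `(1 - r)^{kβ} ≤ 1`, leaving
`∫_0^c r^{α-1} dr = c^α/α`. On `[c, 1]` the factor `r^{α-1}` is decreasing because `α ≤ 1`, so it is
at most `c^{α-1}`, while `∫_c^1 (1 - r)^{kβ} dr ≤ 1/(kβ + 1) < c/β`. The pieces are thus bounded by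
`c^α/α` and `c^α/β`, and `c^α = k^{-α}`.
-/

open Real

section BetaIntegrand

variable {α q : ℝ}

lemma intervalIntegrable_rpow_mul_one_sub_rpow (hα : 0 < α) (hq : 0 ≤ q) (a b : ℝ) :
    IntervalIntegrable (fun r => r ^ (α - 1) * (1 - r) ^ q) MeasureTheory.volume a b :=
  (intervalIntegral.intervalIntegrable_rpow' (by linarith)).mul_continuousOn
    (((continuous_const.sub continuous_id).rpow_const fun _ => Or.inr hq).continuousOn)

lemma integral_rpow_mul_one_sub_rpow_le_of_le_one {c : ℝ} (hα : 0 < α) (hq : 0 ≤ q)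
    (hc0 : 0 ≤ c) (hc1 : c ≤ 1) :
    ∫ r in (0:ℝ)..c, r ^ (α - 1) * (1 - r) ^ q ≤ c ^ α / α := by
  have hmono : ∫ r in (0:ℝ)..c, r ^ (α - 1) * (1 - r) ^ q ≤ ∫ r in (0:ℝ)..c, r ^ (α - 1) := by
    refine intervalIntegral.integral_mono_on hc0
      (intervalIntegrable_rpow_mul_one_sub_rpow hα hq 0 c)
      (intervalIntegral.intervalIntegrable_rpow' (by linarith)) fun r hr => ?_
    exact mul_le_of_le_one_right (rpow_nonneg hr.1 _)
      (rpow_le_one (by linarith [hr.2]) (by linarith [hr.1]) hq)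
  have hpow : ∫ r in (0:ℝ)..c, r ^ (α - 1) = c ^ α / α := by
    rw [integral_rpow (Or.inl (by linarith)), sub_add_cancel, zero_rpow hα.ne', sub_zero]
  exact hpow ▸ hmono

lemma integral_one_sub_rpow_le {c : ℝ} (hq : 0 ≤ q) (hc0 : 0 ≤ c) (hc1 : c ≤ 1) :
    ∫ r in c..(1:ℝ), (1 - r) ^ q ≤ 1 / (q + 1) := by
  have hsubst : ∫ r in c..(1:ℝ), (1 - r) ^ q = (1 - c) ^ (q + 1) / (q + 1) := by
    rw [intervalIntegral.integral_comp_sub_left (fun x => x ^ q), sub_self,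
      integral_rpow (Or.inl (by linarith)), zero_rpow (by linarith), sub_zero]
  rw [hsubst]
  gcongr
  exact rpow_le_one (by linarith) (by linarith) (by linarith)

lemma integral_rpow_mul_one_sub_rpow_le_of_pos {c : ℝ} (hα0 : 0 < α) (hα1 : α ≤ 1)
    (hq : 0 ≤ q) (hc0 : 0 < c) (hc1 : c ≤ 1) :
    ∫ r in c..(1:ℝ), r ^ (α - 1) * (1 - r) ^ q ≤ c ^ (α - 1) / (q + 1) := by
  have hcont : Continuous fun r : ℝ => (1 - r) ^ q :=
    (continuous_const.sub continuous_id).rpow_const fun _ => Or.inr hq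
  calc ∫ r in c..(1:ℝ), r ^ (α - 1) * (1 - r) ^ q
      ≤ ∫ r in c..(1:ℝ), c ^ (α - 1) * (1 - r) ^ q := by
        refine intervalIntegral.integral_mono_on hc1
          (intervalIntegrable_rpow_mul_one_sub_rpow hα0 hq c 1)
          ((continuous_const.mul hcont).intervalIntegrable _ _) fun r hr => ?_
        exact mul_le_mul_of_nonneg_right (rpow_le_rpow_of_nonpos hc0 hr.1 (by linarith))
          (rpow_nonneg (by linarith [hr.2]) _)
    _ = c ^ (α - 1) * ∫ r in c..(1:ℝ), (1 - r) ^ q := intervalIntegral.integral_const_mul _ _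
    _ ≤ c ^ (α - 1) * (1 / (q + 1)) := by
        gcongr
        exact integral_one_sub_rpow_le hq hc0.le hc1
    _ = c ^ (α - 1) / (q + 1) := mul_one_div _ _

end BetaIntegrand

/-- Estimate for Beta functions: for `α ∈ (0,1]`, `β > 0` and `k ≥ 1`,
`B(α, kβ+1) = ∫_0^1 r^{α−1}(1−r)^{kβ} dr ≤ (1/α + 1/β)·k^{−α}`. -/
theorem beta_function_estimate
    (α β : ℝ) (hα0 : 0 < α) (hα1 : α ≤ 1) (hβ : 0 < β) (k : ℕ) (hk : 1 ≤ k) :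
    ∫ r in (0:ℝ)..1, r ^ (α - 1) * (1 - r) ^ ((k : ℝ) * β) ≤
      (1 / α + 1 / β) * (k : ℝ) ^ (-α) := by
  have hk1 : (1:ℝ) ≤ k := by exact_mod_cast hk
  have hk0 : (0:ℝ) < k := by linarith
  set c : ℝ := (k:ℝ)⁻¹
  have hc0 : 0 < c := by positivity
  have hc1 : c ≤ 1 := inv_le_one_of_one_le₀ hk1
  have hq : 0 ≤ (k:ℝ) * β := by positivity
  have hint := intervalIntegrable_rpow_mul_one_sub_rpow hα0 hq
  have hhead := integral_rpow_mul_one_sub_rpow_le_of_le_one hα0 hq hc0.le hc1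
  have htail : ∫ r in c..(1:ℝ), r ^ (α - 1) * (1 - r) ^ ((k:ℝ) * β) ≤ c ^ α / β :=
    calc _ ≤ c ^ (α - 1) / ((k:ℝ) * β + 1) :=
          integral_rpow_mul_one_sub_rpow_le_of_pos hα0 hα1 hq hc0 hc1
      _ ≤ c ^ (α - 1) / ((k:ℝ) * β) := by gcongr; linarith
      _ = c ^ α / β := by
          rw [rpow_sub_one hc0.ne']
          field_simp
          exact (inv_mul_cancel₀ hk0.ne').symm
  have hck : c ^ α = (k:ℝ) ^ (-α) := by rw [inv_rpow hk0.le, rpow_neg hk0.le]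
  rw [← intervalIntegral.integral_add_adjacent_intervals (hint 0 c) (hint c 1), ← hck]
  linarith [show (1 / α + 1 / β) * c ^ α = c ^ α / α + c ^ α / β by ring]
end

section
/- (Two-parameter Gronwall inequality.) Let T > 0, let f, g : {(s,t) : 0 ≤ s ≤ t ≤ T} → [0,∞) be bounded measurable functions and h : [0,T] → [0,∞) integrable. Assume that for all 0 ≤ s ≤ t ≤ T: f(s,t) ≤ g(s,t) + ∫_s^t h(r)·(f(s,r) + f(r,T)) dr. Define G(s,t) := g(s,t) + ∫_s^t g(s,r) h(r) exp(∫_r^t h(r') dr') dr and H(r,t) := h(r)·(1 + ∫_r^t h(r') exp(∫_{r'}^t h(r'') dr'') dr'). Then for all 0 ≤ s ≤ t ≤ T: f(s,t) ≤ G(s,t) + ∫_s^t H(r,t)·( G(r,T) + ∫_r^T G(r',T) H(r',T) exp(∫_r^{r'} H(r'',T) dr'') dr' ) dr. -/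
/-!
For fixed `s`, the hypothesis is a forward Volterra inequality for `t ↦ f s t` with forcing term
`g s t + ∫_s^t h(r) f(r,T) dr`. The integral Gronwall inequality, together with an exchange of the
order of integration and the identity `H(r,t) = h(r) exp(∫_r^t h)`, turns it into
`f(s,t) ≤ G(s,t) + ∫_s^t H(r,t) f(r,T) dr`. At `t = T` this is a backward Volterra inequality
for `r ↦ f(r,T)`, whose Gronwall bound is the bracket in the conclusion; since `H ≥ 0` it can be
substituted for `f(r,T)`.

Both Gronwall inequalities are proved by differentiating `exp(∓∫p) · ∫ p u`, which is
absolutely continuous with derivative at most `exp(∓∫p) p a`. Extending `f, g` by `0` off the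
triangle `0 ≤ s ≤ t ≤ T` and `h` by `0` off `[0,T]` makes all boundedness and integrability
global.
-/

open MeasureTheory Real

noncomputable section

/-- `G(s,t) := g(s,t) + ∫_s^t g(s,r) h(r) exp(∫_r^t h) dr`. -/
def gronG (g : ℝ → ℝ → ℝ) (h : ℝ → ℝ) (s t : ℝ) : ℝ :=
  g s t + ∫ r in s..t, g s r * h r * Real.exp (∫ r' in r..t, h r')

/-- `H(r,t) := h(r)·(1 + ∫_r^t h(r') exp(∫_{r'}^t h) dr')`. -/
def gronH (h : ℝ → ℝ) (r t : ℝ) : ℝ :=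
  h r * (1 + ∫ r' in r..t, h r' * Real.exp (∫ r'' in r'..t, h r''))

open Set Filter Function

theorem LipschitzOnWith.comp_absolutelyContinuousOnInterval {X Y : Type*} [PseudoMetricSpace X]
    [PseudoMetricSpace Y] {φ : X → Y} {K : NNReal} {s : Set X} {f : ℝ → X} {a b : ℝ}
    (hφ : LipschitzOnWith K φ s) (hf : AbsolutelyContinuousOnInterval f a b)
    (hfs : MapsTo f (uIcc a b) s) : AbsolutelyContinuousOnInterval (fun x => φ (f x)) a b := by
  unfold AbsolutelyContinuousOnInterval at hf ⊢
  refine squeeze_zero' (Eventually.of_forall fun E => Finset.sum_nonneg fun i _ => dist_nonneg)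
    ?_ (by simpa using hf.const_mul (K : ℝ))
  filter_upwards [mem_inf_of_right (mem_principal_self _)] with E hE
  rw [Finset.mul_sum]
  gcongr with i hi
  exact hφ.dist_le_mul _ (hfs (hE.1 i hi).1) _ (hfs (hE.1 i hi).2)

theorem ContDiff.comp_absolutelyContinuousOnInterval {φ f : ℝ → ℝ} {a b : ℝ}
    (hφ : ContDiff ℝ 1 φ) (hf : AbsolutelyContinuousOnInterval f a b) :
    AbsolutelyContinuousOnInterval (fun x => φ (f x)) a b := by
  obtain ⟨C, hC⟩ := hf.exists_bound
  obtain ⟨K, hK⟩ := hφ.contDiffOn.exists_lipschitzOnWith one_ne_zero (convex_closedBall 0 C)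
    (isCompact_closedBall 0 C)
  exact hK.comp_absolutelyContinuousOnInterval hf fun x hx => mem_closedBall_zero_iff.2 (hC x hx)

theorem AbsolutelyContinuousOnInterval.sub_le_integral_of_hasDerivAt_le {Φ φ ψ : ℝ → ℝ}
    {a b : ℝ} (hab : a ≤ b) (hΦ : AbsolutelyContinuousOnInterval Φ a b)
    (hφ : ∀ᵐ x, x ∈ uIcc a b → HasDerivAt Φ (φ x) x)
    (hψ : IntervalIntegrable ψ volume a b) (hφψ : ∀ x ∈ Icc a b, φ x ≤ ψ x) :
    Φ b - Φ a ≤ ∫ x in a..b, ψ x := by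
  rw [← hΦ.integral_deriv_eq_sub]
  refine intervalIntegral.integral_mono_ae_restrict hab hΦ.intervalIntegrable_deriv hψ ?_
  rw [EventuallyLE, ae_restrict_iff' measurableSet_Icc]
  filter_upwards [hφ] with x hx hxI
  rw [(hx (by rwa [uIcc_of_le hab])).deriv]
  exact hφψ x hxI

theorem IntervalIntegrable.integral_mul_exp_integral {p : ℝ → ℝ} {a b : ℝ}
    (hp : IntervalIntegrable p volume a b) :
    ∫ r in a..b, p r * exp (∫ y in r..b, p y) = exp (∫ y in a..b, p y) - 1 := by
  have hb : b ∈ uIcc a b := right_mem_uIcc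
  have hE : AbsolutelyContinuousOnInterval (fun x => exp (-∫ y in b..x, p y)) a b :=
    contDiff_exp.comp_absolutelyContinuousOnInterval
      (hp.absolutelyContinuousOnInterval_intervalIntegral hb).fun_neg
  have hderiv : ∀ᵐ x, x ∈ uIoc a b →
      p x * exp (∫ y in x..b, p y) = -deriv (fun x => exp (-∫ y in b..x, p y)) x := by
    filter_upwards [hp.ae_hasDerivAt_integral] with x hx hxI
    rw [((hx (uIoc_subset_uIcc hxI) b hb).fun_neg.exp).deriv, intervalIntegral.integral_symm b x]
    ring
  rw [intervalIntegral.integral_congr_ae hderiv, intervalIntegral.integral_neg,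
    hE.integral_deriv_eq_sub, intervalIntegral.integral_same, intervalIntegral.integral_symm]
  simp

theorem intervalIntegral.integral_primitive_mul {F G : ℝ → ℝ} {a b : ℝ}
    (hF : IntervalIntegrable F volume a b) (hG : IntervalIntegrable G volume a b) :
    ∫ r in a..b, (∫ v in a..r, G v) * F r = ∫ v in a..b, G v * ∫ r in v..b, F r := by
  have ha : a ∈ uIcc a b := left_mem_uIcc
  have hb : b ∈ uIcc a b := right_mem_uIcc
  -- integration by parts against the primitives `∫_b^x F` and `∫_a^x G`
  have hIBP := (hF.absolutelyContinuousOnInterval_intervalIntegral hb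
    ).integral_mul_deriv_eq_deriv_mul (hG.absolutelyContinuousOnInterval_intervalIntegral ha)
  simp only [intervalIntegral.integral_same, zero_mul, mul_zero, sub_zero, zero_sub] at hIBP
  have hderiv : ∀ c ∈ uIcc a b, ∀ {H : ℝ → ℝ}, IntervalIntegrable H volume a b →
      ∀ᵐ x, x ∈ uIoc a b → deriv (fun x => ∫ y in c..x, H y) x = H x := by
    intro c hc H hH
    filter_upwards [hH.ae_hasDerivAt_integral] with x hx hxI
    exact (hx (uIoc_subset_uIcc hxI) c hc).deriv
  have hFG : ∫ r in a..b, (∫ v in a..r, G v) * F r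
      = ∫ r in a..b, deriv (fun x => ∫ y in b..x, F y) r * ∫ v in a..r, G v :=
    intervalIntegral.integral_congr_ae <| by
      filter_upwards [hderiv b hb hF] with x hx hxI using by rw [hx hxI, mul_comm]
  have hGF : ∫ v in a..b, (∫ r in b..v, F r) * deriv (fun x => ∫ y in a..x, G y) v
      = ∫ v in a..b, (∫ r in b..v, F r) * G v :=
    intervalIntegral.integral_congr_ae <| by
      filter_upwards [hderiv a ha hG] with x hx hxI using by rw [hx hxI]
  rw [hFG, ← neg_neg (∫ r in a..b, _), ← hIBP, hGF, ← intervalIntegral.integral_neg]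
  congr 1 with v
  rw [intervalIntegral.integral_symm b v]
  ring

theorem integral_add_integral_primitive_mul_exp {p F : ℝ → ℝ} {s t : ℝ}
    (hp : IntervalIntegrable p volume s t) (hF : IntervalIntegrable F volume s t) :
    (∫ v in s..t, F v) + ∫ r in s..t, (∫ v in s..r, F v) * (p r * exp (∫ y in r..t, p y))
      = ∫ v in s..t, F v * exp (∫ y in v..t, p y) := by
  have hE : ContinuousOn (fun r => exp (∫ y in r..t, p y)) (uIcc s t) :=
    (intervalIntegral.continuousOn_primitive_interval_left ((intervalIntegrable_iff').1 hp)).rexp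
  have hinner : ∫ v in s..t, F v * ∫ r in v..t, p r * exp (∫ y in r..t, p y)
      = ∫ v in s..t, F v * (exp (∫ y in v..t, p y) - 1) :=
    intervalIntegral.integral_congr fun v hv => by
      rw [(hp.mono_set (uIcc_subset_uIcc hv right_mem_uIcc)).integral_mul_exp_integral]
  rw [intervalIntegral.integral_primitive_mul (hp.mul_continuousOn hE) hF, hinner,
    ← intervalIntegral.integral_add hF
      (hF.mul_continuousOn (g := fun v => exp (∫ y in v..t, p y) - 1)
        (hE.sub continuousOn_const))]
  congr 1 with v
  ring

theorem gronwall_integral_forward {p a u : ℝ → ℝ} {α x : ℝ} (hαx : α ≤ x)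
    (hp : IntervalIntegrable p volume α x) (hp0 : ∀ y ∈ Icc α x, 0 ≤ p y)
    (hpu : IntervalIntegrable (fun y => p y * u y) volume α x)
    (hap : IntervalIntegrable (fun y => a y * p y) volume α x)
    (hu : ∀ y ∈ Icc α x, u y ≤ a y + ∫ r in α..y, p r * u r) :
    u x ≤ a x + ∫ r in α..x, a r * p r * exp (∫ y in r..x, p y) := by
  have hα : α ∈ uIcc α x := left_mem_uIcc
  have hx : x ∈ uIcc α x := right_mem_uIcc
  have hE : AbsolutelyContinuousOnInterval (fun y => exp (-∫ r in x..y, p r)) α x :=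
    contDiff_exp.comp_absolutelyContinuousOnInterval
      (hp.absolutelyContinuousOnInterval_intervalIntegral hx).fun_neg
  have hderiv : ∀ᵐ y, y ∈ uIcc α x →
      HasDerivAt (fun y => exp (-∫ r in x..y, p r) * ∫ r in α..y, p r * u r)
        (exp (-∫ r in x..y, p r) * p y * (u y - ∫ r in α..y, p r * u r)) y := by
    filter_upwards [hp.ae_hasDerivAt_integral, hpu.ae_hasDerivAt_integral] with y hP hR hy
    exact (((hP hy x hx).fun_neg.exp).mul (hR hy α hα)).congr_deriv (by ring)
  have key := (hE.fun_mul (hpu.absolutelyContinuousOnInterval_intervalIntegral hα)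
    ).sub_le_integral_of_hasDerivAt_le hαx hderiv (hap.continuousOn_mul hE.continuousOn)
    fun y hy => by
      rw [mul_assoc, mul_comm (a y)]
      gcongr
      · exact hp0 y hy
      · linarith [hu y hy]
  simp only [intervalIntegral.integral_same, neg_zero, exp_zero, one_mul, mul_zero,
    sub_zero] at key
  have hrhs : ∫ r in α..x, a r * p r * exp (∫ y in r..x, p y)
      = ∫ r in α..x, exp (-∫ y in x..r, p y) * (a r * p r) := by
    refine intervalIntegral.integral_congr fun r _ => ?_
    rw [intervalIntegral.integral_symm x r, mul_comm]
  linarith [hu x ⟨hαx, le_rfl⟩]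

theorem gronwall_integral_backward {p a u : ℝ → ℝ} {x β : ℝ} (hxβ : x ≤ β)
    (hp : IntervalIntegrable p volume x β) (hp0 : ∀ y ∈ Icc x β, 0 ≤ p y)
    (hpu : IntervalIntegrable (fun y => p y * u y) volume x β)
    (hap : IntervalIntegrable (fun y => a y * p y) volume x β)
    (hu : ∀ y ∈ Icc x β, u y ≤ a y + ∫ r in y..β, p r * u r) :
    u x ≤ a x + ∫ r in x..β, a r * p r * exp (∫ y in x..r, p y) := by
  have hx : x ∈ uIcc x β := left_mem_uIcc
  have hβ : β ∈ uIcc x β := right_mem_uIcc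
  have hE : AbsolutelyContinuousOnInterval (fun y => exp (∫ r in x..y, p r)) x β :=
    contDiff_exp.comp_absolutelyContinuousOnInterval
      (hp.absolutelyContinuousOnInterval_intervalIntegral hx)
  have hderiv : ∀ᵐ y, y ∈ uIcc x β →
      HasDerivAt (fun y => exp (∫ r in x..y, p r) * ∫ r in β..y, p r * u r)
        (exp (∫ r in x..y, p r) * p y * (u y + ∫ r in β..y, p r * u r)) y := by
    filter_upwards [hp.ae_hasDerivAt_integral, hpu.ae_hasDerivAt_integral] with y hP hR hy
    exact (((hP hy x hx).exp).mul (hR hy β hβ)).congr_deriv (by ring)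
  have key := (hE.fun_mul (hpu.absolutelyContinuousOnInterval_intervalIntegral hβ)
    ).sub_le_integral_of_hasDerivAt_le hxβ hderiv (hap.continuousOn_mul hE.continuousOn)
    fun y hy => by
      rw [mul_assoc, mul_comm (a y)]
      gcongr
      · exact hp0 y hy
      · linarith [hu y hy, intervalIntegral.integral_symm (μ := volume) (f := fun r => p r * u r)
          y β]
  simp only [intervalIntegral.integral_same, exp_zero, one_mul, mul_zero, zero_sub] at key
  have hrhs : ∫ r in x..β, a r * p r * exp (∫ y in x..r, p y)
      = ∫ r in x..β, exp (∫ y in x..r, p y) * (a r * p r) :=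
    intervalIntegral.integral_congr fun r _ => mul_comm _ _
  linarith [hu x ⟨le_rfl, hxβ⟩,
    intervalIntegral.integral_symm (μ := volume) (f := fun r => p r * u r) x β]

theorem abs_intervalIntegral_le_integral {F G : ℝ → ℝ} (hG : Integrable G)
    (hFG : ∀ x, |F x| ≤ G x) (a b : ℝ) : |∫ x in a..b, F x| ≤ ∫ x, G x :=
  calc |∫ x in a..b, F x| ≤ ∫ x in uIoc a b, |F x| := by
        simpa only [Real.norm_eq_abs] using
          intervalIntegral.norm_integral_le_integral_norm_uIoc (f := F) (μ := volume)
    _ ≤ ∫ x in uIoc a b, G x :=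
        integral_mono_of_nonneg (ae_of_all _ fun x => abs_nonneg _) hG.integrableOn
          (ae_of_all _ hFG)
    _ ≤ ∫ x, G x :=
        setIntegral_le_integral hG (ae_of_all _ fun x => (abs_nonneg _).trans (hFG x))

theorem MeasureTheory.Integrable.continuous_intervalIntegral {F : ℝ → ℝ} (hF : Integrable F) :
    Continuous fun z : ℝ × ℝ => ∫ x in z.1..z.2, F x := by
  have h := fun z : ℝ × ℝ => intervalIntegral.integral_interval_sub_left
    (hF.intervalIntegrable (a := 0) (b := z.2)) (hF.intervalIntegrable (b := z.1))
  refine Continuous.congr ?_ h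
  exact ((hF.continuous_primitive 0).comp continuous_snd).sub
    ((hF.continuous_primitive 0).comp continuous_fst)

theorem measurable_intervalIntegral_of_uncurry {K : ℝ → ℝ → ℝ}
    (hK : Measurable (uncurry K)) (b : ℝ) : Measurable fun v => ∫ r in v..b, K v r := by
  have hslice : ∀ S : Set (ℝ × ℝ), MeasurableSet S →
      Measurable fun v => ∫ r in Prod.mk v ⁻¹' S, K v r := fun S hS => by
    convert ((hK.indicator hS).stronglyMeasurable.integral_prod_right' (ν := volume)).measurable
      using 2 with v
    rw [← integral_indicator (measurable_prodMk_left hS)]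
    rfl
  exact (hslice {z | z.1 < z.2 ∧ z.2 ≤ b}
      ((measurableSet_lt measurable_fst measurable_snd).inter
        (measurableSet_le measurable_snd measurable_const))).sub
    (hslice {z | b < z.2 ∧ z.2 ≤ z.1}
      ((measurableSet_lt measurable_const measurable_snd).inter
        (measurableSet_le measurable_snd measurable_fst)))

theorem gronH_eq {h : ℝ → ℝ} {r t : ℝ} (hh : IntervalIntegrable h volume r t) :
    gronH h r t = h r * exp (∫ y in r..t, h y) := by
  rw [gronH, hh.integral_mul_exp_integral]
  ring

theorem gronH_congr {h h' : ℝ → ℝ} {r t : ℝ} (hh : EqOn h h' (uIcc r t)) :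
    gronH h r t = gronH h' r t := by
  rw [gronH, gronH, hh left_mem_uIcc]
  congr 2
  refine intervalIntegral.integral_congr fun r' hr' => ?_
  simp only [hh hr',
    intervalIntegral.integral_congr (hh.mono (uIcc_subset_uIcc hr' right_mem_uIcc))]

/-- The bracket in the conclusion of `two_parameter_gronwall`: the Gronwall bound on `f r T`. -/
def gronW (g : ℝ → ℝ → ℝ) (h : ℝ → ℝ) (T r : ℝ) : ℝ :=
  gronG g h r T +
    ∫ r' in r..T, gronG g h r' T * gronH h r' T * exp (∫ r'' in r..r', gronH h r'' T)

section Integrable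

variable {g : ℝ → ℝ → ℝ} {h : ℝ → ℝ} {Mg : ℝ}

theorem gronG_eq (hh : Integrable h) (s t : ℝ) :
    gronG g h s t = g s t + ∫ r in s..t, g s r * gronH h r t := by
  simp only [gronG, gronH_eq hh.intervalIntegrable, mul_assoc]

theorem exp_intervalIntegral_le (hh : Integrable h) (a b : ℝ) :
    exp (∫ y in a..b, h y) ≤ exp (∫ y, |h y|) :=
  exp_le_exp.2 ((le_abs_self _).trans
    (abs_intervalIntegral_le_integral hh.abs (fun _ => le_rfl) a b))

theorem gronH_nonneg (hh : Integrable h) (hh0 : ∀ r, 0 ≤ h r) (r t : ℝ) :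
    0 ≤ gronH h r t := by
  rw [gronH_eq hh.intervalIntegrable]
  exact mul_nonneg (hh0 r) (exp_pos _).le

theorem integrable_gronH (hh : Integrable h) (t : ℝ) : Integrable fun r => gronH h r t := by
  simp only [gronH_eq hh.intervalIntegrable]
  refine hh.mul_bdd (c := exp (∫ y, |h y|)) (continuous_exp.comp
    (hh.continuous_intervalIntegral.comp (continuous_id.prodMk continuous_const))
    ).aestronglyMeasurable (ae_of_all _ fun r => ?_)
  rw [norm_of_nonneg (exp_pos _).le]
  exact exp_intervalIntegral_le hh r t

theorem measurable_gronH (hhm : Measurable h) (hh : Integrable h) (t : ℝ) :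
    Measurable fun r => gronH h r t := by
  simp only [gronH_eq hh.intervalIntegrable]
  exact hhm.mul (continuous_exp.comp (hh.continuous_intervalIntegral.comp
    (continuous_id.prodMk continuous_const))).measurable

theorem measurable_gronG (hg : Measurable (uncurry g)) (hhm : Measurable h) (hh : Integrable h)
    (t : ℝ) : Measurable fun s => gronG g h s t := by
  simp only [gronG_eq hh]
  exact hg.of_uncurry_right.add (measurable_intervalIntegral_of_uncurry
    (K := fun s r => g s r * gronH h r t)
    (hg.mul ((measurable_gronH hhm hh t).comp measurable_snd)) t)

theorem measurable_gronW (hg : Measurable (uncurry g)) (hhm : Measurable h) (hh : Integrable h)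
    (T : ℝ) : Measurable (gronW g h T) :=
  (measurable_gronG hg hhm hh T).add <| measurable_intervalIntegral_of_uncurry
    (K := fun r r' => gronG g h r' T * gronH h r' T * exp (∫ r'' in r..r', gronH h r'' T))
    ((((measurable_gronG hg hhm hh T).comp measurable_snd).mul
      ((measurable_gronH hhm hh T).comp measurable_snd)).mul
      (continuous_exp.comp (integrable_gronH hh T).continuous_intervalIntegral).measurable) T

theorem exists_abs_gronG_le (hgM : ∀ s t, |g s t| ≤ Mg) (hh : Integrable h)
    (hh0 : ∀ r, 0 ≤ h r) (t : ℝ) : ∃ C, ∀ s, |gronG g h s t| ≤ C := by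
  refine ⟨Mg + ∫ r, Mg * gronH h r t, fun s => ?_⟩
  rw [gronG_eq hh]
  refine (abs_add_le _ _).trans (add_le_add (hgM s t) ?_)
  refine abs_intervalIntegral_le_integral ((integrable_gronH hh t).const_mul Mg) (fun r => ?_) s t
  rw [abs_mul, abs_of_nonneg (gronH_nonneg hh hh0 r t)]
  exact mul_le_mul_of_nonneg_right (hgM s r) (gronH_nonneg hh hh0 r t)

theorem exists_abs_gronW_le (hgM : ∀ s t, |g s t| ≤ Mg) (hh : Integrable h)
    (hh0 : ∀ r, 0 ≤ h r) (T : ℝ) : ∃ C, ∀ r, |gronW g h T r| ≤ C := by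
  obtain ⟨CG, hCG⟩ := exists_abs_gronG_le hgM hh hh0 T
  have hK := integrable_gronH hh T
  set B := exp (∫ y, |gronH h y T|)
  refine ⟨CG + ∫ r', CG * B * gronH h r' T, fun r => ?_⟩
  refine (abs_add_le _ _).trans (add_le_add (hCG r) ?_)
  refine abs_intervalIntegral_le_integral (hK.const_mul _) (fun r' => ?_) r T
  have hK0 := gronH_nonneg hh hh0 r' T
  rw [abs_mul, abs_mul, abs_of_nonneg hK0, abs_of_nonneg (exp_pos _).le]
  calc |gronG g h r' T| * gronH h r' T * exp (∫ r'' in r..r', gronH h r'' T)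
      ≤ CG * gronH h r' T * B :=
        mul_le_mul (mul_le_mul_of_nonneg_right (hCG r') hK0) (exp_intervalIntegral_le hK r r')
          (exp_pos _).le (mul_nonneg ((abs_nonneg _).trans (hCG r')) hK0)
    _ = CG * B * gronH h r' T := by ring

end Integrable

section TwoParameter

variable {T Mf Mg : ℝ} {f g : ℝ → ℝ → ℝ} {h : ℝ → ℝ}

theorem le_gronG_add_integral_gronH_mul (hf : Measurable (uncurry f))
    (hg : Measurable (uncurry g)) (hfM : ∀ s t, |f s t| ≤ Mf) (hgM : ∀ s t, |g s t| ≤ Mg)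
    (hh : Integrable h) (hh0 : ∀ r, 0 ≤ h r)
    (hyp : ∀ s t, 0 ≤ s → s ≤ t → t ≤ T →
      f s t ≤ g s t + ∫ r in s..t, h r * (f s r + f r T))
    {s t : ℝ} (hs : 0 ≤ s) (hst : s ≤ t) (htT : t ≤ T) :
    f s t ≤ gronG g h s t + ∫ v in s..t, gronH h v t * f v T := by
  have hfs : Integrable fun r => h r * f s r :=
    hh.mul_bdd hf.of_uncurry_left.aestronglyMeasurable (ae_of_all _ fun r => hfM s r)
  have hfT : Integrable fun r => h r * f r T :=
    hh.mul_bdd hf.of_uncurry_right.aestronglyMeasurable (ae_of_all _ fun r => hfM r T)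
  have hap : Integrable fun y => (g s y + ∫ r in s..y, h r * f r T) * h y :=
    hh.bdd_mul (hg.of_uncurry_left.add (hfT.continuous_primitive s).measurable).aestronglyMeasurable
      (ae_of_all _ fun y => (abs_add_le _ _).trans
        (add_le_add (hgM s y) (abs_intervalIntegral_le_integral hfT.abs (fun _ => le_rfl) s y)))
  have hgr := gronwall_integral_forward hst hh.intervalIntegrable (fun y _ => hh0 y)
    hfs.intervalIntegrable hap.intervalIntegrable fun y hy => by
      have hy' := hyp s y hs hy.1 (hy.2.trans htT)
      simp only [mul_add] at hy'
      rw [intervalIntegral.integral_add hfs.intervalIntegrable hfT.intervalIntegrable] at hy'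
      linarith
  have hK : Integrable fun r => h r * exp (∫ y in r..t, h y) := by
    simpa only [gronH_eq hh.intervalIntegrable] using integrable_gronH hh t
  have hsplit : ∫ r in s..t, (g s r + ∫ v in s..r, h v * f v T) * h r * exp (∫ y in r..t, h y)
      = (∫ r in s..t, g s r * (h r * exp (∫ y in r..t, h y)))
        + ∫ r in s..t, (∫ v in s..r, h v * f v T) * (h r * exp (∫ y in r..t, h y)) := by
    rw [← intervalIntegral.integral_add
      (hK.bdd_mul hg.of_uncurry_left.aestronglyMeasurable (ae_of_all _ (hgM s))).intervalIntegrable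
      (hK.intervalIntegrable.continuousOn_mul (hfT.continuous_primitive s).continuousOn)]
    exact intervalIntegral.integral_congr fun r _ => by ring
  have hres : ∫ v in s..t, h v * f v T * exp (∫ y in v..t, h y)
      = ∫ v in s..t, gronH h v t * f v T :=
    intervalIntegral.integral_congr fun v _ => by
      rw [gronH_eq hh.intervalIntegrable]
      ring
  rw [hsplit] at hgr
  rw [← hres, ← integral_add_integral_primitive_mul_exp hh.intervalIntegrable
    hfT.intervalIntegrable]
  simp only [gronG, mul_assoc] at hgr ⊢
  linarith

theorem le_gronW (hf : Measurable (uncurry f)) (hg : Measurable (uncurry g))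
    (hfM : ∀ s t, |f s t| ≤ Mf) (hgM : ∀ s t, |g s t| ≤ Mg)
    (hhm : Measurable h) (hh : Integrable h) (hh0 : ∀ r, 0 ≤ h r)
    (hyp : ∀ s t, 0 ≤ s → s ≤ t → t ≤ T →
      f s t ≤ g s t + ∫ r in s..t, h r * (f s r + f r T))
    {v : ℝ} (hv : 0 ≤ v) (hvT : v ≤ T) : f v T ≤ gronW g h T v := by
  obtain ⟨CG, hCG⟩ := exists_abs_gronG_le hgM hh hh0 T
  have hK := integrable_gronH hh T
  exact gronwall_integral_backward hvT hK.intervalIntegrable (fun y _ => gronH_nonneg hh hh0 y T)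
    (hK.mul_bdd hf.of_uncurry_right.aestronglyMeasurable
      (ae_of_all _ fun r => hfM r T)).intervalIntegrable
    (hK.bdd_mul (measurable_gronG hg hhm hh T).aestronglyMeasurable
      (ae_of_all _ hCG)).intervalIntegrable
    fun y hy => le_gronG_add_integral_gronH_mul hf hg hfM hgM hh hh0 hyp (hv.trans hy.1) hy.2 le_rfl

theorem le_gronG_add_integral_gronH_mul_gronW (hf : Measurable (uncurry f))
    (hg : Measurable (uncurry g)) (hfM : ∀ s t, |f s t| ≤ Mf) (hgM : ∀ s t, |g s t| ≤ Mg)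
    (hhm : Measurable h) (hh : Integrable h) (hh0 : ∀ r, 0 ≤ h r)
    (hyp : ∀ s t, 0 ≤ s → s ≤ t → t ≤ T →
      f s t ≤ g s t + ∫ r in s..t, h r * (f s r + f r T))
    {s t : ℝ} (hs : 0 ≤ s) (hst : s ≤ t) (htT : t ≤ T) :
    f s t ≤ gronG g h s t + ∫ r in s..t, gronH h r t * gronW g h T r := by
  obtain ⟨CW, hCW⟩ := exists_abs_gronW_le hgM hh hh0 T
  have hK := integrable_gronH hh t
  refine (le_gronG_add_integral_gronH_mul hf hg hfM hgM hh hh0 hyp hs hst htT).trans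
    (add_le_add_right (intervalIntegral.integral_mono_on hst ?_ ?_ fun v hv => ?_) _)
  · exact (hK.mul_bdd hf.of_uncurry_right.aestronglyMeasurable
      (ae_of_all _ fun r => hfM r T)).intervalIntegrable
  · exact (hK.mul_bdd (measurable_gronW hg hhm hh T).aestronglyMeasurable
      (ae_of_all _ hCW)).intervalIntegrable
  · exact mul_le_mul_of_nonneg_left
      (le_gronW hf hg hfM hgM hhm hh hh0 hyp (hs.trans hv.1) (hv.2.trans htT))
      (gronH_nonneg hh hh0 v t)

end TwoParameter

def triangle (T : ℝ) : Set (ℝ × ℝ) := {z | 0 ≤ z.1 ∧ z.1 ≤ z.2 ∧ z.2 ≤ T}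

theorem measurableSet_triangle (T : ℝ) : MeasurableSet (triangle T) :=
  (measurableSet_le measurable_const measurable_fst).inter
    ((measurableSet_le measurable_fst measurable_snd).inter
      (measurableSet_le measurable_snd measurable_const))

theorem mem_triangle_of_mem_uIcc {T s t r : ℝ} (hst : (s, t) ∈ triangle T)
    (hr : r ∈ uIcc s t) :
    (s, r) ∈ triangle T ∧ (r, t) ∈ triangle T := by
  rw [uIcc_of_le hst.2.1] at hr
  exact ⟨⟨hst.1, hr.1, hr.2.trans hst.2.2⟩, ⟨hst.1.trans hr.1, hr.2, hst.2.2⟩⟩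

theorem uIcc_subset_Icc_of_mem_triangle {T s t : ℝ} (hst : (s, t) ∈ triangle T) :
    uIcc s t ⊆ Icc 0 T := by
  rw [uIcc_of_le hst.2.1]
  exact Icc_subset_Icc hst.1 hst.2.2

section congr

variable {g g' : ℝ → ℝ → ℝ} {h h' : ℝ → ℝ} {T : ℝ}

theorem gronG_congr (hg : ∀ s t, (s, t) ∈ triangle T → g s t = g' s t)
    (hh : EqOn h h' (Icc 0 T)) {s t : ℝ} (hst : (s, t) ∈ triangle T) :
    gronG g h s t = gronG g' h' s t := by
  rw [gronG, gronG, hg s t hst]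
  congr 1
  refine intervalIntegral.integral_congr fun r hr => ?_
  obtain ⟨hsr, hrt⟩ := mem_triangle_of_mem_uIcc hst hr
  simp only [hg s r hsr, hh (uIcc_subset_Icc_of_mem_triangle hst hr),
    intervalIntegral.integral_congr (hh.mono (uIcc_subset_Icc_of_mem_triangle hrt))]

theorem gronW_congr (hg : ∀ s t, (s, t) ∈ triangle T → g s t = g' s t)
    (hh : EqOn h h' (Icc 0 T)) {r : ℝ} (hr : (r, T) ∈ triangle T) :
    gronW g h T r = gronW g' h' T r := by
  have hH : ∀ x ∈ uIcc r T, gronH h x T = gronH h' x T := fun x hx =>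
    gronH_congr (hh.mono (uIcc_subset_Icc_of_mem_triangle (mem_triangle_of_mem_uIcc hr hx).2))
  rw [gronW, gronW, gronG_congr hg hh hr]
  congr 1
  refine intervalIntegral.integral_congr fun x hx => ?_
  simp only [gronG_congr hg hh (mem_triangle_of_mem_uIcc hr hx).2, hH x hx,
    intervalIntegral.integral_congr fun y hy => hH y (uIcc_subset_uIcc_left hx hy)]

theorem gronG_add_integral_gronH_mul_gronW_congr
    (hg : ∀ s t, (s, t) ∈ triangle T → g s t = g' s t)
    (hh : EqOn h h' (Icc 0 T)) {s t : ℝ} (hst : (s, t) ∈ triangle T) :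
    gronG g h s t + ∫ r in s..t, gronH h r t * gronW g h T r
      = gronG g' h' s t + ∫ r in s..t, gronH h' r t * gronW g' h' T r := by
  rw [gronG_congr hg hh hst]
  congr 1
  refine intervalIntegral.integral_congr fun r hr => ?_
  obtain ⟨-, hrt⟩ := mem_triangle_of_mem_uIcc hst hr
  simp only [gronH_congr (hh.mono (uIcc_subset_Icc_of_mem_triangle hrt)),
    gronW_congr hg hh ⟨hrt.1, hrt.2.1.trans hrt.2.2, le_rfl⟩]

end congr

def truncTriangle (T : ℝ) (F : ℝ → ℝ → ℝ) : ℝ → ℝ → ℝ :=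
  curry ((triangle T).indicator (uncurry F))

section truncTriangle

variable {T : ℝ} {F : ℝ → ℝ → ℝ}

theorem truncTriangle_of_mem {s t : ℝ} (hst : (s, t) ∈ triangle T) :
    truncTriangle T F s t = F s t :=
  indicator_of_mem hst (uncurry F)

theorem measurable_truncTriangle (hF : Measurable (uncurry F)) :
    Measurable (uncurry (truncTriangle T F)) :=
  hF.indicator (measurableSet_triangle T)

theorem abs_truncTriangle_le {M : ℝ}
    (hF0 : ∀ s t, 0 ≤ s → s ≤ t → t ≤ T → 0 ≤ F s t)
    (hFM : ∀ s t, 0 ≤ s → s ≤ t → t ≤ T → F s t ≤ M) (s t : ℝ) :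
    |truncTriangle T F s t| ≤ max M 0 := by
  by_cases hst : (s, t) ∈ triangle T
  · rw [truncTriangle_of_mem hst, abs_of_nonneg (hF0 s t hst.1 hst.2.1 hst.2.2)]
    exact le_max_of_le_left (hFM s t hst.1 hst.2.1 hst.2.2)
  · rw [truncTriangle, curry_apply, indicator_of_notMem hst, abs_zero]
    exact le_max_right _ _

theorem truncTriangle_le_add_integral {g : ℝ → ℝ → ℝ} {h : ℝ → ℝ}
    (hyp : ∀ s t, 0 ≤ s → s ≤ t → t ≤ T →
      F s t ≤ g s t + ∫ r in s..t, h r * (F s r + F r T))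
    (s t : ℝ) (hs : 0 ≤ s) (hst : s ≤ t) (htT : t ≤ T) :
    truncTriangle T F s t ≤ truncTriangle T g s t + ∫ r in s..t,
      (Icc 0 T).indicator h r * (truncTriangle T F s r + truncTriangle T F r T) := by
  have hst' : (s, t) ∈ triangle T := ⟨hs, hst, htT⟩
  rw [truncTriangle_of_mem hst', truncTriangle_of_mem hst',
    intervalIntegral.integral_congr fun r hr => ?_]
  · exact hyp s t hs hst htT
  obtain ⟨hsr, hrt⟩ := mem_triangle_of_mem_uIcc hst' hr
  have hrT : (r, T) ∈ triangle T := ⟨hrt.1, hrt.2.1.trans hrt.2.2, le_rfl⟩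
  simp only [indicator_of_mem (uIcc_subset_Icc_of_mem_triangle hst' hr), truncTriangle_of_mem hsr,
    truncTriangle_of_mem hrT]

end truncTriangle

theorem two_parameter_gronwall_general
    (T : ℝ) (f g : ℝ → ℝ → ℝ) (h : ℝ → ℝ)
    (hfmeas : Measurable (Function.uncurry f)) (hgmeas : Measurable (Function.uncurry g))
    (hfnonneg : ∀ s t, 0 ≤ s → s ≤ t → t ≤ T → 0 ≤ f s t)
    (hgnonneg : ∀ s t, 0 ≤ s → s ≤ t → t ≤ T → 0 ≤ g s t)
    (hfbdd : ∃ M, ∀ s t, 0 ≤ s → s ≤ t → t ≤ T → f s t ≤ M)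
    (hgbdd : ∃ M, ∀ s t, 0 ≤ s → s ≤ t → t ≤ T → g s t ≤ M)
    (hhnonneg : ∀ r ∈ Set.Icc (0:ℝ) T, 0 ≤ h r)
    (hhmeas : Measurable h) (hhint : IntegrableOn h (Set.Icc 0 T))
    (hyp : ∀ s t, 0 ≤ s → s ≤ t → t ≤ T →
      f s t ≤ g s t + ∫ r in s..t, h r * (f s r + f r T)) :
    ∀ s t, 0 ≤ s → s ≤ t → t ≤ T →
      f s t ≤ gronG g h s t +
        ∫ r in s..t, gronH h r t *
          (gronG g h r T +
            ∫ r' in r..T, gronG g h r' T * gronH h r' T *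
              Real.exp (∫ r'' in r..r', gronH h r'' T)) := by
  obtain ⟨Mf, hMf⟩ := hfbdd
  obtain ⟨Mg, hMg⟩ := hgbdd
  intro s t hs hst htT
  have hst' : (s, t) ∈ triangle T := ⟨hs, hst, htT⟩
  calc f s t = truncTriangle T f s t := (truncTriangle_of_mem hst').symm
    _ ≤ _ :=
      le_gronG_add_integral_gronH_mul_gronW (measurable_truncTriangle hfmeas)
        (measurable_truncTriangle hgmeas) (abs_truncTriangle_le hfnonneg hMf)
        (abs_truncTriangle_le hgnonneg hMg) (hhmeas.indicator measurableSet_Icc)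
        (hhint.integrable_indicator measurableSet_Icc) (indicator_nonneg hhnonneg)
        (truncTriangle_le_add_integral hyp) hs hst htT
    _ = gronG g h s t + ∫ r in s..t, gronH h r t * gronW g h T r :=
      (gronG_add_integral_gronH_mul_gronW_congr (fun _ _ hmem => (truncTriangle_of_mem hmem).symm)
        (fun _ hr => (indicator_of_mem hr h).symm) hst').symm

/-- Two-parameter Gronwall inequality. -/
theorem two_parameter_gronwall
    (T : ℝ) (hT : 0 < T) (f g : ℝ → ℝ → ℝ) (h : ℝ → ℝ)
    (hfmeas : Measurable (Function.uncurry f)) (hgmeas : Measurable (Function.uncurry g))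
    (hfnonneg : ∀ s t, 0 ≤ s → s ≤ t → t ≤ T → 0 ≤ f s t)
    (hgnonneg : ∀ s t, 0 ≤ s → s ≤ t → t ≤ T → 0 ≤ g s t)
    (hfbdd : ∃ M, ∀ s t, 0 ≤ s → s ≤ t → t ≤ T → f s t ≤ M)
    (hgbdd : ∃ M, ∀ s t, 0 ≤ s → s ≤ t → t ≤ T → g s t ≤ M)
    (hhnonneg : ∀ r ∈ Set.Icc (0:ℝ) T, 0 ≤ h r)
    (hhmeas : Measurable h) (hhint : IntegrableOn h (Set.Icc 0 T))
    (hyp : ∀ s t, 0 ≤ s → s ≤ t → t ≤ T →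
      f s t ≤ g s t + ∫ r in s..t, h r * (f s r + f r T)) :
    ∀ s t, 0 ≤ s → s ≤ t → t ≤ T →
      f s t ≤ gronG g h s t +
        ∫ r in s..t, gronH h r t *
          (gronG g h r T +
            ∫ r' in r..T, gronG g h r' T * gronH h r' T *
              Real.exp (∫ r'' in r..r', gronH h r'' T)) :=
  two_parameter_gronwall_general T f g h hfmeas hgmeas hfnonneg hgnonneg hfbdd hgbdd hhnonneg hhmeas
    hhint hyp

end
end
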